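/- The map ι : H(G,K,V*) → H(G,K,V) defined by ι(Φ)(g) := (Φ(g⁻¹))ᵗ is well defined (ι(Φ) satisfies the K-bi-equivariance and finite-support conditions) and is a C-linear bijection satisfying ι(Φ∗Ψ) = ι(Ψ)∗ι(Φ) for all Φ, Ψ ∈ H(G,K,V*); that is, ι is an anti-isomorphism of C-algebras. -/

import Mathlib

/-!
Transposition `u ↦ uᵗ` is a `C`-linear anti-isomorphism `End(V*) ≃ End(V)` for finite-dimensional
`V`, and it sends `ρ*(k)` to `ρ(k⁻¹)`. Precomposing with `g ↦ g⁻¹`, which swaps the left and right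
`K`-actions and maps `KgK` to `Kg⁻¹K`, therefore carries `H(G,K,V*)` onto `H(G,K,V)`.
For a product, the summand `x ↦ Φ(x) Ψ(x⁻¹g)` of the convolution is right `K`-invariant, so the
sum over `G/K` may be reindexed by left translation by `g⁻¹`; transposing each summand then
reverses the order of the factors.
-/

open scoped Classical

noncomputable section
namespace Paper

variable {C : Type} [Field C] {G : Type} [Group G]

/-- Hecke algebra H(G,K,V) as a submodule of `G → End V`. -/
def Hecke (K : Subgroup G) {V : Type} [AddCommGroup V] [Module C V]
    (ρ : Representation C ↥K V) : Submodule C (G → Module.End C V) where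
  carrier := {Φ | (∀ (k k' : ↥K) (g : G), Φ (↑k * g * ↑k') = ρ k * Φ g * ρ k') ∧
    ∃ S : Finset G, ∀ g : G, Φ g ≠ 0 → ∃ s ∈ S, ∃ k ∈ K, ∃ k' ∈ K, g = k * s * k'}
  add_mem' := by
    rintro a b ⟨ha1, Sa, ha2⟩ ⟨hb1, Sb, hb2⟩
    refine ⟨fun k k' g => by simp [ha1 k k' g, hb1 k k' g, mul_add, add_mul],
      Sa ∪ Sb, fun g hg => ?_⟩
    by_cases h : a g ≠ 0
    · obtain ⟨s, hs, hrest⟩ := ha2 g h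
      exact ⟨s, Finset.mem_union_left _ hs, hrest⟩
    · push_neg at h
      have hbg : b g ≠ 0 := by
        intro hb0; apply hg; simp only [Pi.add_apply, h, hb0, add_zero]
      obtain ⟨s, hs, hrest⟩ := hb2 g hbg
      exact ⟨s, Finset.mem_union_right _ hs, hrest⟩
  zero_mem' := ⟨fun k k' g => by simp, ∅, fun g hg => absurd rfl hg⟩
  smul_mem' := by
    rintro c a ⟨ha1, Sa, ha2⟩
    refine ⟨fun k k' g => by
      simp only [Pi.smul_apply, ha1 k k' g, mul_smul_comm, smul_mul_assoc],
      Sa, fun g hg => ?_⟩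
    refine ha2 g (fun h0 => hg ?_)
    simp only [Pi.smul_apply, h0, smul_zero]

/-- Convolution product on functions `G → End V`, with respect to `K`. -/
def conv (K : Subgroup G) {V : Type} [AddCommGroup V] [Module C V]
    (Φ Ψ : G → Module.End C V) : G → Module.End C V :=
  fun g => ∑ᶠ q : G ⧸ K, Φ (Quotient.out q) * Ψ ((Quotient.out q)⁻¹ * g)

/-- Transpose of an endomorphism of the dual, as an endomorphism of `V`. -/
def transEnd {V : Type} [AddCommGroup V] [Module C V] [FiniteDimensional C V]
    (u : Module.End C (Module.Dual C V)) : Module.End C V :=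
  (Module.evalEquiv C V).symm.toLinearMap ∘ₗ u.dualMap ∘ₗ (Module.evalEquiv C V).toLinearMap

theorem eq_of_forall_dual_apply_eq (R : Type*) {M : Type*} [CommSemiring R] [AddCommMonoid M]
    [Module R M] [Module.Projective R M] {x y : M} (h : ∀ φ : Module.Dual R M, φ x = φ y) :
    x = y :=
  Module.eval_apply_injective R (LinearMap.ext h)

section Transpose

variable {V : Type} [AddCommGroup V] [Module C V] [FiniteDimensional C V]

@[simp]
theorem apply_transEnd_apply (u : Module.End C (Module.Dual C V)) (v : V)
    (φ : Module.Dual C V) : φ (transEnd u v) = u φ v := by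
  have h : Module.evalEquiv C V (transEnd u v) = u.dualMap (Module.evalEquiv C V v) :=
    (Module.evalEquiv C V).apply_symm_apply _
  simpa using congrArg (fun ψ : Module.Dual C (Module.Dual C V) => ψ φ) h

theorem transEnd_mul (u u' : Module.End C (Module.Dual C V)) :
    transEnd (u * u') = transEnd u' * transEnd u := by
  ext v; exact eq_of_forall_dual_apply_eq C fun φ => by simp

theorem transEnd_dualMap (w : Module.End C V) : transEnd (w.dualMap : Module.End C _) = w := by
  ext v; exact eq_of_forall_dual_apply_eq C fun φ => by simp

def transEndEquiv : Module.End C (Module.Dual C V) ≃ₗ[C] Module.End C V where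
  toFun := transEnd
  invFun w := w.dualMap
  map_add' u u' := by ext v; exact eq_of_forall_dual_apply_eq C fun φ => by simp
  map_smul' c u := by ext v; exact eq_of_forall_dual_apply_eq C fun φ => by simp
  left_inv u := by ext φ v; simp
  right_inv := transEnd_dualMap

theorem transEnd_dual {K : Subgroup G} (ρ : Representation C K V) (k : K) :
    transEnd (ρ.dual k) = ρ k⁻¹ :=
  transEnd_dualMap (ρ k⁻¹)

end Transpose

def HasFiniteDoubleCosetSupport {M : Type*} [Zero M] (K : Subgroup G) (Φ : G → M) : Prop :=
  ∃ S : Finset G, ∀ g : G, Φ g ≠ 0 → ∃ s ∈ S, ∃ k ∈ K, ∃ k' ∈ K, g = k * s * k'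

theorem HasFiniteDoubleCosetSupport.comp_inv {M N : Type*} [Zero M] [Zero N] {K : Subgroup G}
    {Φ : G → M} (hΦ : HasFiniteDoubleCosetSupport K Φ) {Ψ : G → N}
    (hΨ : ∀ g, Ψ g ≠ 0 → Φ g⁻¹ ≠ 0) : HasFiniteDoubleCosetSupport K Ψ := by
  obtain ⟨S, hS⟩ := hΦ
  refine ⟨S.image (·⁻¹), fun g hg => ?_⟩
  obtain ⟨s, hs, k, hk, k', hk', hg'⟩ := hS g⁻¹ (hΨ g hg)
  refine ⟨s⁻¹, Finset.mem_image_of_mem _ hs, k'⁻¹, K.inv_mem hk', k⁻¹, K.inv_mem hk, ?_⟩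
  rw [← inv_inv g, hg']
  group

section Hecke

variable {K : Subgroup G} {W V : Type} [AddCommGroup W] [Module C W] [AddCommGroup V]
  [Module C V] {σ : Representation C K W} {ρ : Representation C K V}

theorem Hecke.apply_mul_right {Φ : G → Module.End C V} (hΦ : Φ ∈ Hecke K ρ) (x : G) (k : K) :
    Φ (x * k) = Φ x * ρ k := by
  simpa using hΦ.1 1 k x

theorem Hecke.apply_mul_left {Φ : G → Module.End C V} (hΦ : Φ ∈ Hecke K ρ) (k : K) (x : G) :
    Φ (k * x) = ρ k * Φ x := by
  simpa using hΦ.1 k 1 x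

theorem inv_transpose_mem_Hecke (T : Module.End C W →+ Module.End C V)
    (hT_mul : ∀ a b, T (a * b) = T b * T a) (hT_rep : ∀ k, T (σ k) = ρ k⁻¹)
    {Φ : G → Module.End C W} (hΦ : Φ ∈ Hecke K σ) : (fun g => T (Φ g⁻¹)) ∈ Hecke K ρ := by
  refine ⟨fun k k' g => ?_,
    HasFiniteDoubleCosetSupport.comp_inv hΦ.2 fun g hg h0 => hg (by simp [h0])⟩
  have hinv : ((k : G) * g * k')⁻¹ = ((k'⁻¹ : K) : G) * g⁻¹ * ((k⁻¹ : K) : G) := by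
    simp [mul_assoc]
  change T (Φ (k * g * k')⁻¹) = ρ k * T (Φ g⁻¹) * ρ k'
  rw [hinv, hΦ.1, hT_mul, hT_mul, hT_rep, hT_rep, inv_inv, inv_inv, mul_assoc]

theorem finsum_apply_mul_out {M : Type*} [AddCommMonoid M] {F : G → M}
    (hF : ∀ x, ∀ k ∈ K, F (x * k) = F x) (h : G) :
    ∑ᶠ q : G ⧸ K, F (h * q.out) = ∑ᶠ q : G ⧸ K, F q.out := by
  have hout : ∀ q : G ⧸ K, F (h * q.out) = F (h • q).out := fun q => by
    have hk : (h * q.out)⁻¹ * (h • q).out ∈ K :=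
      QuotientGroup.eq.mp ((MulAction.Quotient.mk_smul_out K h q).trans (h • q).out_eq'.symm)
    rw [← hF _ _ hk, mul_inv_cancel_left]
  simp_rw [hout]
  exact finsum_comp_equiv (f := fun q : G ⧸ K => F q.out) (MulAction.toPerm h)

theorem conv_apply_eq_finsum_mul_out {Φ Ψ : G → Module.End C W}
    (hΦ : ∀ x (k : K), Φ (x * k) = Φ x * σ k) (hΨ : ∀ (k : K) x, Ψ (k * x) = σ k * Ψ x)
    (g h : G) : conv K Φ Ψ g = ∑ᶠ q : G ⧸ K, Φ (h * q.out) * Ψ ((h * q.out)⁻¹ * g) := by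
  refine (finsum_apply_mul_out (F := fun x => Φ x * Ψ (x⁻¹ * g)) (fun x k hk => ?_) h).symm
  have hΨ' : Ψ (k⁻¹ * (x⁻¹ * g)) = σ ⟨k, hk⟩⁻¹ * Ψ (x⁻¹ * g) := hΨ ⟨k, hk⟩⁻¹ (x⁻¹ * g)
  rw [hΦ x ⟨k, hk⟩, mul_inv_rev, mul_assoc k⁻¹, hΨ', mul_assoc, ← mul_assoc (σ _), ← map_mul,
    mul_inv_cancel, map_one, one_mul]

theorem inv_transpose_conv (T : Module.End C W ≃+ Module.End C V)
    (hT_mul : ∀ a b, T (a * b) = T b * T a) {Φ Ψ : G → Module.End C W}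
    (hΦ : ∀ x (k : K), Φ (x * k) = Φ x * σ k) (hΨ : ∀ (k : K) x, Ψ (k * x) = σ k * Ψ x) :
    (fun g => T (conv K Φ Ψ g⁻¹)) = conv K (fun g => T (Ψ g⁻¹)) (fun g => T (Φ g⁻¹)) := by
  funext g
  rw [conv_apply_eq_finsum_mul_out hΦ hΨ g⁻¹ g⁻¹, AddEquiv.map_finsum]
  refine finsum_congr fun q => ?_
  simp only [hT_mul, mul_inv_rev, inv_inv, mul_inv_cancel_right]

end Hecke

theorem statement5_general {V : Type} [AddCommGroup V] [Module C V] [FiniteDimensional C V]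
    (K : Subgroup G)
    (ρ : Representation C ↥K V) :
    let ι : (G → Module.End C (Module.Dual C V)) → (G → Module.End C V) :=
      fun Φ g => transEnd (Φ g⁻¹)
    -- ι is well defined : it maps H(G,K,V*) into H(G,K,V)
    (∀ Φ ∈ Hecke K ρ.dual, ι Φ ∈ Hecke K ρ) ∧
    -- ι is C-linear
    (∀ Φ Ψ : G → Module.End C (Module.Dual C V), ι (Φ + Ψ) = ι Φ + ι Ψ) ∧
    (∀ (c : C) (Φ : G → Module.End C (Module.Dual C V)), ι (c • Φ) = c • ι Φ) ∧
    -- ι is a bijection from H(G,K,V*) onto H(G,K,V)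
    (∀ Φ ∈ Hecke K ρ.dual, ∀ Ψ ∈ Hecke K ρ.dual, ι Φ = ι Ψ → Φ = Ψ) ∧
    (∀ Ξ ∈ Hecke K ρ, ∃ Φ ∈ Hecke K ρ.dual, ι Φ = Ξ) ∧
    -- ι is anti-multiplicative : ι(Φ∗Ψ) = ι(Ψ)∗ι(Φ)
    (∀ Φ ∈ Hecke K ρ.dual, ∀ Ψ ∈ Hecke K ρ.dual,
      ι (conv K Φ Ψ) = conv K (ι Ψ) (ι Φ)) := by
  intro ι
  have transpose_rep (k : K) : Module.Dual.transpose (ρ k) = ρ.dual k⁻¹ := by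
    rw [Representation.dual_apply, inv_inv]
  refine ⟨fun Φ hΦ => ?_, fun Φ Ψ => ?_, fun c Φ => ?_, fun Φ _ Ψ _ h => ?_, fun Ξ hΞ => ?_,
    fun Φ hΦ Ψ hΨ => ?_⟩
  · exact inv_transpose_mem_Hecke transEndEquiv.toLinearMap.toAddMonoidHom transEnd_mul
      (transEnd_dual ρ) hΦ
  · exact funext fun g => map_add transEndEquiv (Φ g⁻¹) (Ψ g⁻¹)
  · exact funext fun g => map_smul transEndEquiv c (Φ g⁻¹)
  · funext g
    have hg : transEnd (Φ g⁻¹⁻¹) = transEnd (Ψ g⁻¹⁻¹) := congrFun h g⁻¹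
    rw [inv_inv] at hg
    exact transEndEquiv.injective hg
  · refine ⟨fun g => (Ξ g⁻¹).dualMap,
      inv_transpose_mem_Hecke Module.Dual.transpose.toAddMonoidHom
        (fun a b => Module.Dual.transpose_comp a b) transpose_rep hΞ,
      funext fun g => ?_⟩
    simpa [ι] using transEnd_dualMap (Ξ g)
  · exact inv_transpose_conv transEndEquiv.toAddEquiv (fun u u' => transEnd_mul u u')
      (Hecke.apply_mul_right hΦ) (Hecke.apply_mul_left hΨ)

theorem statement5 {V : Type} [AddCommGroup V] [Module C V] [FiniteDimensional C V]
    (K : Subgroup G)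
    (hA1 : ∀ g : G, ∃ S : Finset G, ∀ x : G,
      (∃ k ∈ K, ∃ k' ∈ K, x = k * g * k') → ∃ s ∈ S, ∃ k ∈ K, x = k * s)
    (ρ : Representation C ↥K V) :
    let ι : (G → Module.End C (Module.Dual C V)) → (G → Module.End C V) :=
      fun Φ g => transEnd (Φ g⁻¹)
    -- ι is well defined : it maps H(G,K,V*) into H(G,K,V)
    (∀ Φ ∈ Hecke K ρ.dual, ι Φ ∈ Hecke K ρ) ∧
    -- ι is C-linear
    (∀ Φ Ψ : G → Module.End C (Module.Dual C V), ι (Φ + Ψ) = ι Φ + ι Ψ) ∧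
    (∀ (c : C) (Φ : G → Module.End C (Module.Dual C V)), ι (c • Φ) = c • ι Φ) ∧
    -- ι is a bijection from H(G,K,V*) onto H(G,K,V)
    (∀ Φ ∈ Hecke K ρ.dual, ∀ Ψ ∈ Hecke K ρ.dual, ι Φ = ι Ψ → Φ = Ψ) ∧
    (∀ Ξ ∈ Hecke K ρ, ∃ Φ ∈ Hecke K ρ.dual, ι Φ = Ξ) ∧
    -- ι is anti-multiplicative : ι(Φ∗Ψ) = ι(Ψ)∗ι(Φ)
    (∀ Φ ∈ Hecke K ρ.dual, ∀ Ψ ∈ Hecke K ρ.dual,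
      ι (conv K Φ Ψ) = conv K (ι Ψ) (ι Φ)) :=
  statement5_general K ρ

end Paper
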